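/- arXiv:1102.0209 — 2 statements merged into one kernel-verified Lean document; each statement's English description precedes it below -/
import Mathlib

section
/- Let ABC be an acute triangle inscribed in a circle of radius R with orthocenter H, and let B', C' be the reflections of H over CA and AB respectively. Then the length B'C' = 2R·sin(2A), where A = ∠BAC. -/
/-!
The reflections B', C' of the orthocentre H in the sides CA, AB lie on the circumcircle. Both
reflections fix A and reverse oriented angles, so the oriented angle B'AC' is twice the oriented
angle CAB. The extended law of sines in the circumcircle then gives
B'C' = 2R |sin ∡B'AC'| = 2R |sin 2A|, and sin 2A ≥ 0 because A is acute.
-/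

open EuclideanGeometry Real RealInnerProductSpace

open Module

attribute [local instance] FiniteDimensional.of_fact_finrank_eq_two

theorem finrank_direction_affineSpan_pair {k V P : Type*} [DivisionRing k] [AddCommGroup V]
    [Module k V] [AddTorsor V P] {p₁ p₂ : P} (h : p₁ ≠ p₂) :
    finrank k line[k, p₁, p₂].direction = 1 := by
  rw [direction_affineSpan, vectorSpan_pair, finrank_span_singleton (vsub_ne_zero.2 h)]

namespace Orientation

variable {V : Type*} [NormedAddCommGroup V] [InnerProductSpace ℝ V] [Fact (finrank ℝ V = 2)]
  (o : Orientation ℝ V (Fin 2))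

theorem oangle_reflection {K : Submodule ℝ V} (hK : finrank ℝ K = 1) (x y : V) :
    o.oangle (K.reflection x) (K.reflection y) = -o.oangle x y := by
  have hKperp : finrank ℝ Kᗮ = 1 :=
    Submodule.finrank_add_finrank_orthogonal' (by rw [hK, Fact.out (p := finrank ℝ V = 2)])
  have hdet : LinearMap.det K.reflection.toLinearMap < 0 := by
    rw [K.det_reflection, hKperp]
    norm_num
  have hmap : map (Fin 2) K.reflection.toLinearEquiv o = -o :=
    (o.map_eq_neg_iff_det_neg _ (by simp [Fact.out (p := finrank ℝ V = 2)])).2 hdet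
  have := o.oangle_map (K.reflection x) (K.reflection y) K.reflection
  rwa [hmap, oangle_neg_orientation_eq_neg, Submodule.reflection_symm,
    Submodule.reflection_reflection, Submodule.reflection_reflection, neg_eq_iff_eq_neg] at this

end Orientation

namespace EuclideanGeometry

variable {V P : Type*} [NormedAddCommGroup V] [InnerProductSpace ℝ V] [MetricSpace P]
  [NormedAddTorsor V P]

theorem reflection_ne_of_mem {s : AffineSubspace ℝ P} [Nonempty s]
    [s.direction.HasOrthogonalProjection] {p q : P} (hq : q ∈ s) (h : p ≠ q) :
    reflection s p ≠ q := by
  simpa only [(reflection_eq_self_iff q).2 hq] using (reflection s).injective.ne h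

theorem affineIndependent_of_angle_lt_pi_div_two {A B C : P} (hA : ∠ C A B < π / 2)
    (hB : ∠ A B C < π / 2) (hC : ∠ B C A < π / 2) : AffineIndependent ℝ ![A, B, C] := by
  have hAB : A ≠ B := by rintro rfl; simp at hA
  have hBC : B ≠ C := by rintro rfl; simp at hB
  have hCA : C ≠ A := by rintro rfl; simp at hC
  have hpi := pi_pos
  rw [affineIndependent_iff_not_collinear_set]
  intro hcol
  rcases hcol.wbtw_or_wbtw_or_wbtw with h | h | h
  · have := Sbtw.angle₁₂₃_eq_pi ⟨h, hAB.symm, hBC⟩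
    linarith
  · have := Sbtw.angle₁₂₃_eq_pi ⟨h, hBC.symm, hCA⟩
    linarith
  · have := Sbtw.angle₁₂₃_eq_pi ⟨h, hCA.symm, hAB⟩
    linarith

end EuclideanGeometry

namespace Affine.Triangle

variable {V P : Type*} [NormedAddCommGroup V] [InnerProductSpace ℝ V] [MetricSpace P]
  [NormedAddTorsor V P]

theorem mem_altitude_of_inner_vsub_eq_zero (t : Triangle ℝ P) {i j k : Fin 3} (hij : i ≠ j)
    (hik : i ≠ k) (hjk : j ≠ k) {p : P} (hp : p ∈ affineSpan ℝ (Set.range t.points))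
    (h : ⟪t.points i -ᵥ p, t.points j -ᵥ t.points k⟫ = 0) : p ∈ t.altitude i := by
  have himage : t.points '' {i}ᶜ = {t.points j, t.points k} := by
    rw [← Set.image_pair]
    congr 1
    ext l
    simp only [Set.mem_compl_iff, Set.mem_singleton_iff, Set.mem_insert_iff]
    omega
  rw [Simplex.altitude_def, AffineSubspace.mem_inf_iff, AffineSubspace.mem_mk', himage,
    direction_affineSpan, vectorSpan_pair, Submodule.mem_orthogonal_singleton_iff_inner_right,
    ← neg_vsub_eq_vsub_rev (t.points i), inner_neg_right, real_inner_comm, h, neg_zero]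
  exact ⟨rfl, hp⟩

theorem eq_orthocenter_of_inner_vsub_eq_zero (t : Triangle ℝ P) {p : P}
    (hp : p ∈ affineSpan ℝ (Set.range t.points))
    (h₀ : ⟪t.points 0 -ᵥ p, t.points 1 -ᵥ t.points 2⟫ = 0)
    (h₁ : ⟪t.points 1 -ᵥ p, t.points 2 -ᵥ t.points 0⟫ = 0) : p = t.orthocenter :=
  eq_orthocenter_of_forall_mem_altitude (i₁ := 0) (i₂ := 1) (by decide)
    (t.mem_altitude_of_inner_vsub_eq_zero (by decide) (by decide) (by decide) hp h₀)
    (t.mem_altitude_of_inner_vsub_eq_zero (by decide) (by decide) (by decide) hp h₁)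

theorem reflection_orthocenter_mem_circumsphere (t : Triangle ℝ P) {i₁ i₂ : Fin 3}
    (h : i₁ ≠ i₂) :
    reflection line[ℝ, t.points i₁, t.points i₂] t.orthocenter ∈ t.circumsphere := by
  rw [mem_sphere, dist_comm, Simplex.circumsphere_center, Simplex.circumsphere_radius]
  simpa only [Set.image_pair] using t.dist_circumcenter_reflection_orthocenter h

end Affine.Triangle

namespace EuclideanGeometry

variable {V P : Type*} [NormedAddCommGroup V] [InnerProductSpace ℝ V] [MetricSpace P]
  [NormedAddTorsor V P] [Fact (finrank ℝ V = 2)] [Module.Oriented ℝ V (Fin 2)]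

theorem oangle_reflection {s : AffineSubspace ℝ P} [Nonempty s]
    [s.direction.HasOrthogonalProjection] (hs : finrank ℝ s.direction = 1) (p₁ p₂ p₃ : P) :
    ∡ (reflection s p₁) (reflection s p₂) (reflection s p₃) = -∡ p₁ p₂ p₃ := by
  simp only [oangle, ← (reflection s).map_vsub]
  exact positiveOrientation.oangle_reflection hs _ _

theorem oangle_reflection_reflection_eq_two_zsmul {A B C p : P} (hB : B ≠ A) (hC : C ≠ A)
    (hp : p ≠ A) :
    ∡ (reflection line[ℝ, C, A] p) A (reflection line[ℝ, A, B] p) = (2 : ℤ) • ∡ C A B := by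
  have hA₁ : reflection line[ℝ, C, A] A = A :=
    (reflection_eq_self_iff _).2 (right_mem_affineSpan_pair ..)
  have hC₁ : reflection line[ℝ, C, A] C = C :=
    (reflection_eq_self_iff _).2 (left_mem_affineSpan_pair ..)
  have hA₂ : reflection line[ℝ, A, B] A = A :=
    (reflection_eq_self_iff _).2 (left_mem_affineSpan_pair ..)
  have hB₂ : reflection line[ℝ, A, B] B = B :=
    (reflection_eq_self_iff _).2 (right_mem_affineSpan_pair ..)
  have hb := reflection_ne_of_mem (right_mem_affineSpan_pair ℝ C A) hp
  have hc := reflection_ne_of_mem (left_mem_affineSpan_pair ℝ A B) hp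
  have hpC : ∡ (reflection line[ℝ, C, A] p) A C = ∡ C A p := by
    have := oangle_reflection (finrank_direction_affineSpan_pair hC) p A C
    rwa [hA₁, hC₁, ← oangle_rev] at this
  have hpB : ∡ B A (reflection line[ℝ, A, B] p) = ∡ p A B := by
    have := oangle_reflection (finrank_direction_affineSpan_pair hB.symm) B A p
    rwa [hA₂, hB₂, ← oangle_rev] at this
  rw [← oangle_add hb hC hc, ← oangle_add hC hB hc, hpC, hpB, two_zsmul,
    ← oangle_add hC hp hB]
  abel

theorem abs_sin_two_zsmul_oangle {A B C : P} (hB : B ≠ A) (hC : C ≠ A) :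
    |((2 : ℤ) • ∡ C A B).sin| = |Real.sin (2 * ∠ C A B)| := by
  rcases oangle_eq_angle_or_eq_neg_angle hC hB with h | h <;>
    simp [h, ← Real.Angle.coe_zsmul, zsmul_eq_mul]

theorem Sphere.dist_eq_two_mul_radius_mul_abs_sin_oangle {s : Sphere P} {p₁ p₂ p₃ : P}
    (hp₁ : p₁ ∈ s) (hp₂ : p₂ ∈ s) (hp₃ : p₃ ∈ s) (hp₁p₂ : p₁ ≠ p₂) (hp₂p₃ : p₂ ≠ p₃) :
    dist p₁ p₃ = 2 * s.radius * |(∡ p₁ p₂ p₃).sin| := by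
  rcases eq_or_ne p₁ p₃ with rfl | hp₁p₃
  · simp
  have h := Sphere.dist_div_sin_oangle_eq_two_mul_radius hp₁ hp₂ hp₃ hp₁p₂ hp₁p₃ hp₂p₃
  rcases eq_or_ne |(∡ p₁ p₂ p₃).sin| 0 with h0 | h0
  · rw [h0, div_zero, eq_comm, mul_eq_zero, or_iff_right two_ne_zero] at h
    rw [mem_sphere, h, dist_eq_zero] at hp₁ hp₂
    exact absurd (hp₁.trans hp₂.symm) hp₁p₂
  · rw [← h, div_mul_cancel₀ _ h0]

end EuclideanGeometry

namespace Affine.Triangle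

variable {V P : Type*} [NormedAddCommGroup V] [InnerProductSpace ℝ V] [MetricSpace P]
  [NormedAddTorsor V P] [Fact (finrank ℝ V = 2)]

theorem dist_reflection_orthocenter_eq_two_mul_circumradius_mul_sin (t : Triangle ℝ P)
    (hH : t.orthocenter ≠ t.points 0) (hA : ∠ (t.points 1) (t.points 0) (t.points 2) ≤ π / 2) :
    dist (reflection line[ℝ, t.points 2, t.points 0] t.orthocenter)
        (reflection line[ℝ, t.points 0, t.points 1] t.orthocenter) =
      2 * t.circumradius * Real.sin (2 * ∠ (t.points 1) (t.points 0) (t.points 2)) := by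
  have : Module.Oriented ℝ V (Fin 2) := ⟨(finBasisOfFinrankEq ℝ V Fact.out).orientation⟩
  have h₁₀ : t.points 1 ≠ t.points 0 := t.independent.injective.ne (by decide)
  have h₂₀ : t.points 2 ≠ t.points 0 := t.independent.injective.ne (by decide)
  rw [Sphere.dist_eq_two_mul_radius_mul_abs_sin_oangle
      (t.reflection_orthocenter_mem_circumsphere (by decide)) (t.mem_circumsphere 0)
      (t.reflection_orthocenter_mem_circumsphere (by decide))
      (reflection_ne_of_mem (right_mem_affineSpan_pair ..) hH)
      (reflection_ne_of_mem (left_mem_affineSpan_pair ..) hH).symm,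
    Simplex.circumsphere_radius, oangle_reflection_reflection_eq_two_zsmul h₁₀ h₂₀ hH,
    abs_sin_two_zsmul_oangle h₁₀ h₂₀, angle_comm, abs_of_nonneg (Real.sin_nonneg_of_nonneg_of_le_pi
      (by linarith [angle_nonneg (t.points 1) (t.points 0) (t.points 2)]) (by linarith))]

end Affine.Triangle

theorem stmt4_general
    (A B C H B' C' O : EuclideanSpace ℝ (Fin 2))
 (R : ℝ)
    (hacute : ∠ C A B < π / 2 ∧ ∠ A B C < π / 2 ∧ ∠ B C A < π / 2)
    (hH₁ : ⟪A - H, B - C⟫ = (0:ℝ)) (hH₂ : ⟪B - H, C - A⟫ = (0:ℝ))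
    (hO : dist O A = R ∧ dist O B = R ∧ dist O C = R)
    (hB' : B' = EuclideanGeometry.reflection (affineSpan ℝ {C, A}) H)
    (hC' : C' = EuclideanGeometry.reflection (affineSpan ℝ {A, B}) H) :
    dist B' C' = 2 * R * Real.sin (2 * ∠ B A C) := by
  obtain ⟨hA, hB, hC⟩ := hacute
  obtain ⟨hOA, hOB, hOC⟩ := hO
  have : Fact (finrank ℝ (EuclideanSpace ℝ (Fin 2)) = 2) := ⟨finrank_euclideanSpace_fin⟩
  let t : Affine.Triangle ℝ (EuclideanSpace ℝ (Fin 2)) :=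
    ⟨![A, B, C], affineIndependent_of_angle_lt_pi_div_two hA hB hC⟩
  have hspan (p : EuclideanSpace ℝ (Fin 2)) : p ∈ affineSpan ℝ (Set.range t.points) :=
    t.span_eq_top finrank_euclideanSpace_fin ▸ AffineSubspace.mem_top ℝ _ p
  have hR : R = t.circumradius := by
    refine t.eq_circumradius_of_dist_eq (hspan O) fun i ↦ ?_
    fin_cases i <;> rw [dist_comm]
    exacts [hOA, hOB, hOC]
  have hH : H = t.orthocenter :=
    t.eq_orthocenter_of_inner_vsub_eq_zero (hspan H) hH₁ hH₂
  have hHA : H ≠ A := by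
    rintro rfl
    rw [angle, InnerProductGeometry.angle_comm] at hA
    exact hA.ne ((InnerProductGeometry.inner_eq_zero_iff_angle_eq_pi_div_two _ _).1 hH₂)
  rw [hB', hC', hR, hH]
  exact t.dist_reflection_orthocenter_eq_two_mul_circumradius_mul_sin (hH ▸ hHA)
    ((angle_comm B A C).trans_le hA.le)

theorem stmt4
    (A B C H B' C' O : EuclideanSpace ℝ (Fin 2))
 (R : ℝ)
    (hacute : ∠ C A B < π / 2 ∧ ∠ A B C < π / 2 ∧ ∠ B C A < π / 2)
    (hH₁ : ⟪A - H, B - C⟫ = (0:ℝ)) (hH₂ : ⟪B - H, C - A⟫ = (0:ℝ))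
    (hH₃ : ⟪C - H, A - B⟫ = (0:ℝ))
    (hO : dist O A = R ∧ dist O B = R ∧ dist O C = R)
    (hB' : B' = EuclideanGeometry.reflection (affineSpan ℝ {C, A}) H)
    (hC' : C' = EuclideanGeometry.reflection (affineSpan ℝ {A, B}) H) :
    dist B' C' = 2 * R * Real.sin (2 * ∠ B A C) :=
  stmt4_general A B C H B' C' O R hacute hH₁ hH₂ hO hB' hC'
end

section
/- Let ABC be an acute triangle with orthocenter H, let A', B', C' be the reflections of H over BC, CA, AB respectively, and let X, Y, Z be the reflections of A, B, C over the lines B'C', C'A', A'B' respectively. Then H is the orthocenter of triangle XYZ. -/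
/-!
Put the circumcentre at the origin of `ℂ`, so that the vertices `a, b, c` lie on a circle
`‖z‖ = r` and `H = a + b + c`. Reflection in the chord through `b` and `c` is
`p ↦ b + c - b c p̄ / r²`; hence `A' = -b c / a` lies on the circle again, and reflecting `a` in
the chord `B'C'` gives `X = H - s (b⁻¹ + c⁻¹)` with `s = a b + b c + c a`. Therefore
`X - H = -s (b⁻¹ + c⁻¹)` and `Y - Z = -s (c⁻¹ - b⁻¹)`: up to the common factor `-s` these are the
sum and the difference of two vectors of equal length, hence perpendicular. Acuteness gives
`b ≠ ±c`, so that every line in the construction is spanned by two distinct points.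
-/

open EuclideanGeometry Real RealInnerProductSpace ComplexConjugate

theorem ne_zero_of_norm_eq_of_norm_eq_of_ne {E : Type*} [NormedAddCommGroup E] {b c : E} {r : ℝ}
    (hb : ‖b‖ = r) (hc : ‖c‖ = r) (hbc : b ≠ c) : r ≠ 0 := by
  rintro rfl
  exact hbc ((norm_eq_zero.1 hb).trans (norm_eq_zero.1 hc).symm)

section Transport

variable {V P V₂ P₂ : Type*} [NormedAddCommGroup V] [InnerProductSpace ℝ V] [MetricSpace P]
  [NormedAddTorsor V P] [NormedAddCommGroup V₂] [InnerProductSpace ℝ V₂] [MetricSpace P₂]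
  [NormedAddTorsor V₂ P₂]

theorem EuclideanGeometry.reflection_affineSpan_pair_map [FiniteDimensional ℝ V]
    [FiniteDimensional ℝ V₂] (φ : P ≃ᵃⁱ[ℝ] P₂) (b c p : P) :
    reflection (affineSpan ℝ {φ b, φ c}) (φ p) = φ (reflection (affineSpan ℝ {b, c}) p) := by
  simpa [AffineSubspace.map_span, Set.image_pair] using
    reflection_map (affineSpan ℝ {b, c}) φ.toAffineIsometry p

theorem AffineIsometryEquiv.angle_map (φ : P ≃ᵃⁱ[ℝ] P₂) (p₁ p₂ p₃ : P) :
    ∠ (φ p₁) (φ p₂) (φ p₃) = ∠ p₁ p₂ p₃ :=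
  φ.toAffineIsometry.angle_map p₁ p₂ p₃

theorem AffineIsometryEquiv.inner_map_sub_map (φ : V ≃ᵃⁱ[ℝ] V₂) (u v w t : V) :
    ⟪φ u - φ v, φ w - φ t⟫ = ⟪u - v, w - t⟫ := by
  simp only [← vsub_eq_sub, ← φ.map_vsub, LinearIsometryEquiv.inner_map_map]

theorem norm_eq_norm_of_inner_sub_eq_zero {a b c h : V} (hh : h = a + b + c)
    (hH : ⟪a - h, b - c⟫ = 0) : ‖b‖ = ‖c‖ := by
  rwa [hh, show a - (a + b + c) = -(b + c) by abel, inner_neg_left, neg_eq_zero,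
    real_inner_add_sub_eq_zero_iff] at hH

-- The origin goes to `(A + B + C - H) / 2`, the circumcentre when `H` is the orthocentre.
theorem exists_affineIsometryEquiv_complex_eq_add_add (hV : Module.finrank ℝ V = 2)
    (A B C H : V) : ∃ (φ : ℂ ≃ᵃⁱ[ℝ] V) (a b c : ℂ),
      A = φ a ∧ B = φ b ∧ C = φ c ∧ H = φ (a + b + c) := by
  have : FiniteDimensional ℝ V := Module.finite_of_finrank_eq_succ hV
  let f := Complex.isometryOfOrthonormal ((stdOrthonormalBasis ℝ V).reindex (finCongr hV))
  let O : V := (2 : ℝ)⁻¹ • (A + B + C - H)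
  let φ := f.toAffineIsometryEquiv.trans (AffineIsometryEquiv.vaddConst ℝ O)
  refine ⟨φ, f.symm (A - O), f.symm (B - O), f.symm (C - O), ?_, ?_, ?_, ?_⟩ <;>
    simp only [φ, AffineIsometryEquiv.coe_trans, AffineIsometryEquiv.coe_vaddConst,
      LinearIsometryEquiv.coe_toAffineIsometryEquiv, Function.comp_apply, vadd_eq_add, map_add,
      LinearIsometryEquiv.apply_symm_apply, sub_add_cancel]
  simp only [O]
  module

end Transport

namespace Complex

theorem orthogonalProjection_affineSpan_pair {u v : ℂ} (huv : u ≠ v) (p : ℂ) :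
    (orthogonalProjection (affineSpan ℝ {u, v}) p : ℂ) =
      u + ((p - u) / (v - u)).re * (v - u) := by
  have hvu : v - u ≠ 0 := sub_ne_zero.2 huv.symm
  obtain ⟨z, rfl⟩ : ∃ z, p = u + z * (v - u) := ⟨(p - u) / (v - u), by field_simp; ring⟩
  rw [coe_orthogonalProjection_eq_iff_mem, direction_affineSpan, vectorSpan_pair,
    Submodule.mem_orthogonal_singleton_iff_inner_right, add_sub_cancel_left,
    mul_div_cancel_right₀ _ hvu]
  refine ⟨?_, ?_⟩
  · convert AffineMap.lineMap_mem_affineSpan_pair (k := ℝ) z.re u v using 1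
    rw [AffineMap.lineMap_apply, vsub_eq_sub, vadd_eq_add, real_smul, add_comm]
  · rw [vsub_eq_sub, vsub_eq_sub, Complex.inner, add_sub_add_left_eq_sub, ← sub_mul,
      show u - v = -(v - u) by ring, map_neg, mul_neg, mul_assoc, mul_conj', ← ofReal_pow]
    simp [sq]

theorem reflection_affineSpan_pair {u v : ℂ} (huv : u ≠ v) (p : ℂ) :
    reflection (affineSpan ℝ {u, v}) p = u + (v - u) / conj (v - u) * conj (p - u) := by
  have hvu : v - u ≠ 0 := sub_ne_zero.2 huv.symm
  have hvu' : conj (v - u) ≠ 0 := (map_ne_zero _).2 hvu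
  obtain ⟨z, rfl⟩ : ∃ z, p = u + z * (v - u) := ⟨(p - u) / (v - u), by field_simp; ring⟩
  rw [reflection_apply', orthogonalProjection_affineSpan_pair huv, vsub_eq_sub, vadd_eq_add,
    add_sub_cancel_left, mul_div_cancel_right₀ _ hvu, re_eq_add_conj, map_mul]
  field_simp
  ring

theorem conj_eq_sq_div_of_norm_eq {z : ℂ} {r : ℝ} (hz : ‖z‖ = r) (hr : r ≠ 0) :
    conj z = r ^ 2 / z := by
  rw [eq_div_iff (norm_ne_zero_iff.1 (hz.trans_ne hr)), mul_comm, mul_conj', hz]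

theorem reflection_affineSpan_pair_of_norm_eq {b c : ℂ} {r : ℝ} (hb : ‖b‖ = r) (hc : ‖c‖ = r)
    (hbc : b ≠ c) (p : ℂ) :
    reflection (affineSpan ℝ {b, c}) p = b + c - b * c * conj p / r ^ 2 := by
  have hr := ne_zero_of_norm_eq_of_norm_eq_of_ne hb hc hbc
  have hr' : (r : ℂ) ≠ 0 := ofReal_ne_zero.2 hr
  have hb0 : b ≠ 0 := norm_ne_zero_iff.1 (hb.trans_ne hr)
  have hc0 : c ≠ 0 := norm_ne_zero_iff.1 (hc.trans_ne hr)
  rw [reflection_affineSpan_pair hbc, map_sub, map_sub, conj_eq_sq_div_of_norm_eq hb hr,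
    conj_eq_sq_div_of_norm_eq hc hr]
  field_simp
  ring

theorem reflection_affineSpan_pair_orthocenter {a b c h : ℂ} {r : ℝ} (ha : ‖a‖ = r)
    (hb : ‖b‖ = r) (hc : ‖c‖ = r) (hbc : b ≠ c) (hh : h = a + b + c) :
    reflection (affineSpan ℝ {b, c}) h = -(b * c) / a := by
  have hr := ne_zero_of_norm_eq_of_norm_eq_of_ne hb hc hbc
  have hr' : (r : ℂ) ≠ 0 := ofReal_ne_zero.2 hr
  have ha0 : a ≠ 0 := norm_ne_zero_iff.1 (ha.trans_ne hr)
  have hb0 : b ≠ 0 := norm_ne_zero_iff.1 (hb.trans_ne hr)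
  have hc0 : c ≠ 0 := norm_ne_zero_iff.1 (hc.trans_ne hr)
  rw [reflection_affineSpan_pair_of_norm_eq hb hc hbc, hh, map_add, map_add,
    conj_eq_sq_div_of_norm_eq ha hr, conj_eq_sq_div_of_norm_eq hb hr,
    conj_eq_sq_div_of_norm_eq hc hr]
  field_simp
  ring

theorem reflection_affineSpan_pair_neg_mul_div {a b c h : ℂ} {r : ℝ} (ha : ‖a‖ = r)
    (hb : ‖b‖ = r) (hc : ‖c‖ = r) (hbc : b ^ 2 ≠ c ^ 2) (hh : h = a + b + c) :
    reflection (affineSpan ℝ {-(c * a) / b, -(a * b) / c}) a =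
      h - (a * b + b * c + c * a) * (b⁻¹ + c⁻¹) := by
  have hr := ne_zero_of_norm_eq_of_norm_eq_of_ne hb hc (ne_of_apply_ne (· ^ 2) hbc)
  have hr' : (r : ℂ) ≠ 0 := ofReal_ne_zero.2 hr
  have ha0 : a ≠ 0 := norm_ne_zero_iff.1 (ha.trans_ne hr)
  have hb0 : b ≠ 0 := norm_ne_zero_iff.1 (hb.trans_ne hr)
  have hc0 : c ≠ 0 := norm_ne_zero_iff.1 (hc.trans_ne hr)
  have hb' : ‖-(c * a) / b‖ = r := by
    simp only [norm_neg, norm_div, norm_mul, ha, hb, hc]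
    field_simp
  have hc' : ‖-(a * b) / c‖ = r := by
    simp only [norm_neg, norm_div, norm_mul, ha, hb, hc]
    field_simp
  have hb'c' : -(c * a) / b ≠ -(a * b) / c := by
    rw [Ne, div_eq_div_iff hb0 hc0]
    contrapose! hbc
    exact mul_left_cancel₀ ha0 (by linear_combination hbc)
  rw [reflection_affineSpan_pair_of_norm_eq hb' hc' hb'c', conj_eq_sq_div_of_norm_eq ha hr, hh]
  field_simp
  ring

theorem inner_mul_add_mul_sub_eq_zero {u v : ℂ} (huv : ‖u‖ = ‖v‖) (w : ℂ) :
    ⟪w * (u + v), w * (u - v)⟫ = 0 := by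
  rw [Complex.inner, map_mul, mul_mul_mul_comm, mul_conj', ← ofReal_pow, re_ofReal_mul,
    ← Complex.inner, (real_inner_add_sub_eq_zero_iff u v).2 huv, mul_zero]

theorem sq_ne_sq_of_angle_ne_pi_div_two {a b c : ℂ} {r : ℝ} (ha : ‖a‖ = r) (hb : ‖b‖ = r)
    (hc : ‖c‖ = r) (hA : ∠ c a b ≠ π / 2) (hB : ∠ a b c ≠ π / 2) : b ^ 2 ≠ c ^ 2 := by
  intro hsq
  rcases sq_eq_sq_iff_eq_or_eq_neg.1 hsq with rfl | rfl
  · exact hB (angle_self_right b a)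
  · refine hA ((InnerProductGeometry.inner_eq_zero_iff_angle_eq_pi_div_two _ _).1 ?_)
    rw [vsub_eq_sub, vsub_eq_sub, show -c - a = -(c + a) by ring, inner_neg_right,
      real_inner_comm, (real_inner_add_sub_eq_zero_iff c a).2 (hc.trans ha.symm), neg_zero]

theorem reflection_triangle_inner_sub_eq_zero {a b c h a' b' c' x y z : ℂ} {r : ℝ}
    (ha : ‖a‖ = r) (hb : ‖b‖ = r) (hc : ‖c‖ = r) (hbc : b ^ 2 ≠ c ^ 2) (hca : c ^ 2 ≠ a ^ 2)
    (hab : a ^ 2 ≠ b ^ 2) (hh : h = a + b + c)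
    (ha' : a' = reflection (affineSpan ℝ {b, c}) h)
    (hb' : b' = reflection (affineSpan ℝ {c, a}) h)
    (hc' : c' = reflection (affineSpan ℝ {a, b}) h)
    (hx : x = reflection (affineSpan ℝ {b', c'}) a)
    (hy : y = reflection (affineSpan ℝ {c', a'}) b)
    (hz : z = reflection (affineSpan ℝ {a', b'}) c) :
    ⟪x - h, y - z⟫ = 0 ∧ ⟪y - h, z - x⟫ = 0 ∧ ⟪z - h, x - y⟫ = 0 := by
  have hh₂ : h = b + c + a := by rw [hh]; ring
  have hh₃ : h = c + a + b := by rw [hh]; ring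
  rw [reflection_affineSpan_pair_orthocenter ha hb hc (ne_of_apply_ne (· ^ 2) hbc) hh] at ha'
  rw [reflection_affineSpan_pair_orthocenter hb hc ha (ne_of_apply_ne (· ^ 2) hca) hh₂] at hb'
  rw [reflection_affineSpan_pair_orthocenter hc ha hb (ne_of_apply_ne (· ^ 2) hab) hh₃] at hc'
  subst ha' hb' hc'
  rw [reflection_affineSpan_pair_neg_mul_div ha hb hc hbc hh] at hx
  rw [reflection_affineSpan_pair_neg_mul_div hb hc ha hca hh₂] at hy
  rw [reflection_affineSpan_pair_neg_mul_div hc ha hb hab hh₃] at hz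
  subst hx hy hz
  have hnorm {u v : ℂ} (hu : ‖u‖ = r) (hv : ‖v‖ = r) : ‖u⁻¹‖ = ‖v⁻¹‖ := by
    rw [norm_inv, norm_inv, hu, hv]
  refine ⟨?_, ?_, ?_⟩
  · convert inner_mul_add_mul_sub_eq_zero (hnorm hc hb) (-(a * b + b * c + c * a)) using 2 <;> ring
  · convert inner_mul_add_mul_sub_eq_zero (hnorm ha hc) (-(a * b + b * c + c * a)) using 2 <;> ring
  · convert inner_mul_add_mul_sub_eq_zero (hnorm hb ha) (-(a * b + b * c + c * a)) using 2 <;> ring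

end Complex

theorem stmt7_general
    (A B C H A' B' C' X Y Z : EuclideanSpace ℝ (Fin 2))

    (hacute : ∠ C A B < π / 2 ∧ ∠ A B C < π / 2 ∧ ∠ B C A < π / 2)
    (hH₁ : ⟪A - H, B - C⟫ = (0:ℝ)) (hH₂ : ⟪B - H, C - A⟫ = (0:ℝ))
    (hA' : A' = EuclideanGeometry.reflection (affineSpan ℝ {B, C}) H)
    (hB' : B' = EuclideanGeometry.reflection (affineSpan ℝ {C, A}) H)
    (hC' : C' = EuclideanGeometry.reflection (affineSpan ℝ {A, B}) H)
    (hX : X = EuclideanGeometry.reflection (affineSpan ℝ {B', C'}) A)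
    (hY : Y = EuclideanGeometry.reflection (affineSpan ℝ {C', A'}) B)
    (hZ : Z = EuclideanGeometry.reflection (affineSpan ℝ {A', B'}) C) :
    ⟪X - H, Y - Z⟫ = (0:ℝ) ∧ ⟪Y - H, Z - X⟫ = (0:ℝ) ∧ ⟪Z - H, X - Y⟫ = (0:ℝ) := by
  obtain ⟨φ, a, b, c, rfl, rfl, rfl, rfl⟩ :=
    exists_affineIsometryEquiv_complex_eq_add_add finrank_euclideanSpace_fin A B C H
  simp only [reflection_affineSpan_pair_map] at hA' hB' hC'
  subst hA' hB' hC'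
  simp only [reflection_affineSpan_pair_map] at hX hY hZ
  subst hX hY hZ
  simp only [φ.inner_map_sub_map, φ.angle_map] at hacute hH₁ hH₂ ⊢
  obtain ⟨hA, hB, hC⟩ := hacute
  have hb : ‖b‖ = ‖c‖ := norm_eq_norm_of_inner_sub_eq_zero rfl hH₁
  have ha : ‖a‖ = ‖c‖ := (norm_eq_norm_of_inner_sub_eq_zero (add_rotate a b c) hH₂).symm
  exact Complex.reflection_triangle_inner_sub_eq_zero ha hb rfl
    (Complex.sq_ne_sq_of_angle_ne_pi_div_two ha hb rfl hA.ne hB.ne)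
    (Complex.sq_ne_sq_of_angle_ne_pi_div_two hb rfl ha hB.ne hC.ne)
    (Complex.sq_ne_sq_of_angle_ne_pi_div_two rfl ha hb hC.ne hA.ne) rfl rfl rfl rfl rfl rfl rfl

theorem stmt7
    (A B C H A' B' C' X Y Z : EuclideanSpace ℝ (Fin 2))

    (hacute : ∠ C A B < π / 2 ∧ ∠ A B C < π / 2 ∧ ∠ B C A < π / 2)
    (hH₁ : ⟪A - H, B - C⟫ = (0:ℝ)) (hH₂ : ⟪B - H, C - A⟫ = (0:ℝ))
    (hH₃ : ⟪C - H, A - B⟫ = (0:ℝ))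
    (hA' : A' = EuclideanGeometry.reflection (affineSpan ℝ {B, C}) H)
    (hB' : B' = EuclideanGeometry.reflection (affineSpan ℝ {C, A}) H)
    (hC' : C' = EuclideanGeometry.reflection (affineSpan ℝ {A, B}) H)
    (hX : X = EuclideanGeometry.reflection (affineSpan ℝ {B', C'}) A)
    (hY : Y = EuclideanGeometry.reflection (affineSpan ℝ {C', A'}) B)
    (hZ : Z = EuclideanGeometry.reflection (affineSpan ℝ {A', B'}) C)
    (hXYZ : AffineIndependent ℝ ![X, Y, Z]) :
    ⟪X - H, Y - Z⟫ = (0:ℝ) ∧ ⟪Y - H, Z - X⟫ = (0:ℝ) ∧ ⟪Z - H, X - Y⟫ = (0:ℝ) :=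
  stmt7_general A B C H A' B' C' X Y Z hacute hH₁ hH₂ hA' hB' hC' hX hY hZ
end
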